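/- Let Q₁ be an N×N complex matrix (N ≥ 2) all of whose eigenvalues have nonnegative real part and which has 0 as an eigenvalue, and let p ≥ 0 be real. Let Q be the supra-Laplacian of the multiplex with two identical layers Q₂ = Q₁. Then the second smallest element of the multiset of real parts of the eigenvalues of Q equals min( Reλ₂(Q₁), 2p ), where Reλ₂(Q₁) is the second smallest element of the multiset of real parts of the eigenvalues of Q₁. In particular, a multiplex of two identical directed layers is never superdiffusive. -/

import Mathlib

/-!
Since the two diagonal blocks of `[[A, B], [B, A]]` agree, the change of basis
`[[1, 0], [1, 1]]` makes it block triangular, so `det [[A, B], [B, A]] = det (A + B) det (A - B)`.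
For identical layers `A + B = Q₁` and `A - B = Q₁ + 2p`, hence the spectrum of the
supra-Laplacian is the spectrum of `Q₁` together with its translate by `2p`. The smallest real
part is the eigenvalue `0` of `Q₁`; the next one is the smaller of `Reλ₂(Q₁)` and the least real
part `0 + 2p` of the translate.
-/

open Matrix

/-- The second smallest element of a multiset of real numbers
(the second entry of the multiset sorted in non-decreasing order). -/
noncomputable def secondSmallest (s : Multiset ℝ) : ℝ :=
  (s.sort (· ≤ ·)).getD 1 0

open Polynomial

theorem secondSmallest_cons_of_forall_le {a b : ℝ} {u : Multiset ℝ} (hau : ∀ x ∈ u, a ≤ x)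
    (hb : b ∈ u) (hbu : ∀ x ∈ u, b ≤ x) : secondSmallest (a ::ₘ u) = b := by
  rw [secondSmallest, Multiset.sort_cons _ _ _ hau, ← Multiset.cons_erase hb,
    Multiset.sort_cons _ _ _ fun x hx => hbu x (Multiset.mem_of_mem_erase hx)]
  rfl

theorem secondSmallest_add_map_add {s : Multiset ℝ} {a : ℝ} (ha : a ∈ s) (has : ∀ x ∈ s, a ≤ x)
    (hs : 2 ≤ Multiset.card s) {c : ℝ} (hc : 0 ≤ c) :
    secondSmallest (s + s.map (· + c)) = min (secondSmallest s) (a + c) := by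
  set t := s.erase a
  have hst : s = a ::ₘ t := (Multiset.cons_erase ha).symm
  have ht : t ≠ 0 := by
    intro h
    rw [hst, h] at hs
    simp at hs
  obtain ⟨m, hm, hmt⟩ := Multiset.exists_min_image id ht
  have hshift : ∀ x ∈ s.map (· + c), a + c ≤ x := by
    simp only [Multiset.mem_map, forall_exists_index, and_imp, forall_apply_eq_imp_iff₂]
    exact fun x hx => by linarith [has x hx]
  have hat : ∀ x ∈ t, a ≤ x := fun x hx => has x (Multiset.mem_of_mem_erase hx)
  have hsum : s + s.map (· + c) = a ::ₘ (t + s.map (· + c)) := by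
    rw [← Multiset.cons_add, ← hst]
  have hsecond : secondSmallest s = m := by
    rw [hst]
    exact secondSmallest_cons_of_forall_le hat hm hmt
  rw [hsum, hsecond]
  apply secondSmallest_cons_of_forall_le
  · simp only [Multiset.mem_add]
    rintro x (hx | hx)
    · exact hat x hx
    · linarith [hshift x hx]
  · rcases le_total m (a + c) with h | h
    · rw [min_eq_left h]
      exact Multiset.mem_add.mpr (Or.inl hm)
    · rw [min_eq_right h]
      exact Multiset.mem_add.mpr (Or.inr (Multiset.mem_map.mpr ⟨a, ha, rfl⟩))
  · simp only [Multiset.mem_add]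
    rintro x (hx | hx)
    · exact (min_le_left _ _).trans (hmt x hx)
    · exact (min_le_right _ _).trans (hshift x hx)

section

variable {n R : Type*} [DecidableEq n] [Fintype n]

theorem Matrix.det_fromBlocks_self [CommRing R] (A B : Matrix n n R) :
    (fromBlocks A B B A).det = (A + B).det * (A - B).det := by
  have h : fromBlocks A B B A =
      fromBlocks 1 0 1 1 * fromBlocks (A + B) B 0 (A - B) * fromBlocks 1 0 (-1) 1 := by
    simp only [fromBlocks_multiply, fromBlocks_inj]
    refine ⟨?_, ?_, ?_, ?_⟩ <;> noncomm_ring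
  rw [h, det_mul, det_mul, det_fromBlocks_zero₁₂, det_fromBlocks_zero₂₁,
    det_fromBlocks_zero₁₂, det_one]
  ring

theorem Matrix.charmatrix_add [CommRing R] (A B : Matrix n n R) :
    charmatrix (A + B) = charmatrix A - B.map C := by
  rw [charmatrix, charmatrix, RingHom.mapMatrix_apply, RingHom.mapMatrix_apply,
    Matrix.map_add _ (map_add C), sub_add_eq_sub_sub]

theorem Matrix.charpoly_fromBlocks_self [CommRing R] (A B : Matrix n n R) :
    (fromBlocks A B B A).charpoly = (A + B).charpoly * (A - B).charpoly := by
  rw [charpoly, charmatrix_fromBlocks, det_fromBlocks_self, ← sub_eq_add_neg, sub_neg_eq_add,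
    charpoly, charpoly, charmatrix_add, sub_eq_add_neg A, charmatrix_add,
    Matrix.map_neg _ (map_neg C), sub_neg_eq_add]

theorem Matrix.roots_charpoly_add_smul_one [CommRing R] [IsDomain R] (A : Matrix n n R)
    (c : R) :
    (A + c • 1).charpoly.roots = A.charpoly.roots.map (· + c) := by
  have := charpoly_sub_scalar A (-c)
  rw [scalar_apply, ← smul_one_eq_diagonal, neg_smul, sub_neg_eq_add] at this
  rw [this, ← one_mul X, ← C_1, roots_comp_C_mul_X_add_C _ _ _ isUnit_one]
  simp [sub_eq_add_neg]

def supraLaplacian [Ring R] (Q₁ Q₂ : Matrix n n R) (p : R) : Matrix (n ⊕ n) (n ⊕ n) R :=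
  fromBlocks (Q₁ + p • 1) (-(p • 1)) (-(p • 1)) (Q₂ + p • 1)

theorem roots_charpoly_supraLaplacian_self [CommRing R] [IsDomain R] (Q : Matrix n n R)
    (p : R) :
    (supraLaplacian Q Q p).charpoly.roots =
      Q.charpoly.roots + Q.charpoly.roots.map (· + 2 * p) := by
  have hsum : Q + p • 1 + -(p • 1) = Q := by abel
  have hdiff : Q + p • 1 - -(p • 1) = Q + (2 * p) • 1 := by rw [two_mul, add_smul]; abel
  rw [supraLaplacian, charpoly_fromBlocks_self, hsum, hdiff,
    roots_mul ((charpoly_monic _).mul (charpoly_monic _)).ne_zero, roots_charpoly_add_smul_one]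

end

/-- For a multiplex made of two identical (possibly directed) layers `Q₂ = Q₁`, where all
eigenvalues of `Q₁` have nonnegative real part and `0` is an eigenvalue of `Q₁`, the second
smallest real part of the eigenvalues of the supra-Laplacian equals
`min(Reλ₂(Q₁), 2p)`: a multiplex of two identical layers is never superdiffusive. -/
theorem identical_layers_never_superdiffusive
    (N : ℕ) (hN : 2 ≤ N) (Q1 : Matrix (Fin N) (Fin N) ℂ)
    (hre : ∀ μ ∈ Q1.charpoly.roots, 0 ≤ μ.re)
    (h0 : (0 : ℂ) ∈ Q1.charpoly.roots)
    (p : ℝ) (hp : 0 ≤ p) :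
    secondSmallest
        (((Matrix.fromBlocks (Q1 + (p : ℂ) • 1) (-((p : ℂ) • 1)) (-((p : ℂ) • 1))
            (Q1 + (p : ℂ) • 1)).charpoly.roots).map Complex.re) =
      min (secondSmallest ((Q1.charpoly.roots).map Complex.re)) (2 * p) := by
  have hspec := roots_charpoly_supraLaplacian_self Q1 (p : ℂ)
  have hre_shift : Complex.re ∘ (· + 2 * (p : ℂ)) = (· + 2 * p) ∘ Complex.re := by
    ext z; simp
  have hcard : 2 ≤ Multiset.card (Q1.charpoly.roots.map Complex.re) := by
    rwa [Multiset.card_map, IsAlgClosed.card_roots_eq_natDegree, charpoly_natDegree_eq_dim,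
      Fintype.card_fin]
  rw [supraLaplacian] at hspec
  rw [hspec, Multiset.map_add, Multiset.map_map, hre_shift, ← Multiset.map_map,
    secondSmallest_add_map_add (Multiset.mem_map_of_mem _ h0)
      (Multiset.forall_mem_map_iff.mpr hre) hcard (by positivity), Complex.zero_re, zero_add]
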